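/- arXiv:1901.08863 — 6 statements merged into one kernel-verified Lean document; each statement's English description precedes it below -/
import Mathlib

section
/- For all real numbers a, r with 0 < a < r < 1, the quantity (1/2)(a²+1)²[1/((ar+1)²(a−r)²) + 1/((r+a)²(ar−1)²)] − (1−r²)r/(1+r²)⁴ is strictly positive. -/
set_option maxHeartbeats 1000000


theorem stmt_0 (a r : ℝ) (ha : 0 < a) (har : a < r) (hr : r < 1) :
    0 < (1/2) * (a^2+1)^2 *
        (1/((a*r+1)^2*(a-r)^2) + 1/((r+a)^2*(a*r-1)^2))
      - (1-r^2)*r/(1+r^2)^4 := by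
  have hr0 : 0 < r := lt_trans ha har
  have hD1 : 0 < (a*r+1)^2*(a-r)^2 := by
    have h1 : a - r ≠ 0 := by nlinarith
    have h2 : a*r + 1 ≠ 0 := by nlinarith
    positivity
  have hD2 : 0 < (r+a)^2*(a*r-1)^2 := by
    have h1 : a*r - 1 ≠ 0 := by nlinarith
    have h2 : r + a ≠ 0 := by nlinarith
    positivity
  have ha1 : (a*r+1)^2 < (1+r^2)^2 := by
    nlinarith [mul_pos (show 0 < r^2 - a*r by nlinarith) (show 0 < 2 + a*r + r^2 by nlinarith [mul_pos ha hr0, sq_nonneg r])]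
  have ha2 : (a-r)^2 < r^2 := by
    nlinarith [mul_pos ha (show 0 < 2*r - a by nlinarith)]
  have h1 : (a*r+1)^2*(a-r)^2 < ((1+r^2)*r)^2 := by
    have := mul_lt_mul'' ha1 ha2 (sq_nonneg _) (sq_nonneg _)
    nlinarith [this]
  have h2 : 1/(((1+r^2)*r)^2) < 1/((a*r+1)^2*(a-r)^2) :=
    one_div_lt_one_div_of_lt hD1 h1
  have hkey : 2*r^3*(1-r^2) < (1+r^2)^2 := by nlinarith [sq_nonneg r, mul_pos (mul_pos hr0 hr0) (sub_pos.mpr hr)]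
  have h3 : (1-r^2)*r/(1+r^2)^4 < 1/(2*(((1+r^2)*r)^2)) := by
    rw [div_lt_div_iff₀ (by positivity) (by positivity)]
    nlinarith [mul_lt_mul_of_pos_right hkey (show (0:ℝ) < (1+r^2)^2 by positivity)]
  have h3' : (1-r^2)*r/(1+r^2)^4 < 1/2 * (1/(((1+r^2)*r)^2)) := by
    have hX : (((1+r^2)*r)^2) ≠ 0 := by positivity
    have heq : (1:ℝ)/(2*(((1+r^2)*r)^2)) = 1/2 * (1/(((1+r^2)*r)^2)) := by
      field_simp
    linarith [h3, heq.le]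
  have hv : 0 < 1/((r+a)^2*(a*r-1)^2) := by positivity
  have hu : 0 < 1/(((1+r^2)*r)^2) := by positivity
  have hsq : 1 ≤ (a^2+1)^2 := by nlinarith [sq_nonneg a]
  nlinarith [mul_le_mul_of_nonneg_right hsq (le_of_lt (by positivity : (0:ℝ) < 1/((a*r+1)^2*(a-r)^2) + 1/((r+a)^2*(a*r-1)^2)))]
end

section
/- For fixed r ∈ (0,1), the function H(a) = (1/2)(a²+1)²/((ar−1)²(a+r)²) − (1−r²)r/(1+r²)⁴, viewed as a function of a ∈ (0,1), attains its minimum at a = (1−r)/(1+r), and the minimum value equals (r²+r+2)(2r²−r+1)/(r²+1)⁴, which is strictly positive. -/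
theorem stmt_1 (r : ℝ) (hr0 : 0 < r) (hr1 : r < 1) :
    (∀ a ∈ Set.Ioo (0:ℝ) 1,
        (1/2) * (((1-r)/(1+r))^2+1)^2 / ((((1-r)/(1+r))*r-1)^2*(((1-r)/(1+r))+r)^2)
          - (1-r^2)*r/(1+r^2)^4
        ≤ (1/2) * (a^2+1)^2 / ((a*r-1)^2*(a+r)^2) - (1-r^2)*r/(1+r^2)^4) ∧
    (1/2) * (((1-r)/(1+r))^2+1)^2 / ((((1-r)/(1+r))*r-1)^2*(((1-r)/(1+r))+r)^2)
      - (1-r^2)*r/(1+r^2)^4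
      = (r^2+r+2)*(2*r^2-r+1)/(r^2+1)^4 ∧
    0 < (r^2+r+2)*(2*r^2-r+1)/(r^2+1)^4 := by
  have h1r : (0:ℝ) < 1 + r := by linarith
  have h1r2 : (0:ℝ) < 1 + r^2 := by positivity
  have hne : (1 + r) ≠ 0 := h1r.ne'
  have hne2 : (1 + r^2) ≠ 0 := h1r2.ne'
  have hconst : (1/2) * (((1-r)/(1+r))^2+1)^2 / ((((1-r)/(1+r))*r-1)^2*(((1-r)/(1+r))+r)^2)
      = 2/(1+r^2)^2 := by
    have hmr : ((1-r)/(1+r))*r-1 = -((1+r^2)/(1+r)) := by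
      field_simp; ring
    have hpr : ((1-r)/(1+r))+r = (1+r^2)/(1+r) := by
      field_simp; ring
    have hsq : ((1-r)/(1+r))^2+1 = 2*(1+r^2)/(1+r)^2 := by
      rw [div_pow, div_add' _ _ _ (by positivity)]
      rw [div_eq_div_iff (by positivity) (by positivity)]
      ring
    rw [hmr, hpr, hsq, neg_sq]
    field_simp
  refine ⟨?_, ?_, ?_⟩
  · intro a ha
    obtain ⟨ha0, ha1⟩ := ha
    rw [hconst]
    have har : 0 < 1 - a*r := by nlinarith
    have hd : (0:ℝ) < (a*r-1)^2*(a+r)^2 := by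
      have h2 : (a*r-1)^2 = (1-a*r)^2 := by ring
      rw [h2]
      exact mul_pos (pow_pos har 2) (pow_pos (by linarith) 2)
    have key : 2/(1+r^2)^2 ≤ (1/2) * (a^2+1)^2 / ((a*r-1)^2*(a+r)^2) := by
      rw [div_le_div_iff₀ (by positivity) hd]
      nlinarith [mul_nonneg (sq_nonneg ((a-1)+r*(a+1))) (sq_nonneg ((a+1)-r*(a-1)))]
    linarith
  · rw [hconst]
    rw [div_sub_div _ _ (by positivity) (by positivity), div_eq_div_iff (by positivity) (by positivity)]
    ring
  · have hnum : 0 < (r^2+r+2)*(2*r^2-r+1) := by nlinarith [sq_nonneg (2*r-1)]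
    exact div_pos hnum (by positivity)
end

section
/- In the curved 5-body problem with masses m₁ = μ > 0, m₂ = m₃ = 1, m₄ = m₅ = m > 0 and collinear symmetric positions 0, ±a, ±r with 0 < a < 1 < r and ar < 1, the relative-equilibrium equation for body 2, −(1−a²)a/(1+a²)⁴ = −(1/2)μ/a² − (1/8)(a²+1)²/(a²(1−a²)²) − 2m(r²+1)²ar(r²−1)(1−a²)/((a²r²−1)²(r²−a²)²), has no solution with μ > 0 and m > 0. -/
theorem stmt_11 (a r μ m : ℝ) (ha : 0 < a) (ha1 : a < 1) (hr : 1 < r)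
    (har : a*r < 1) (hμ : 0 < μ) (hm : 0 < m) :
    -((1-a^2)*a)/(1+a^2)^4
      ≠ -(1/2)*μ/a^2 - (1/8)*(a^2+1)^2/(a^2*(1-a^2)^2)
          - 2*m*(r^2+1)^2*a*r*(r^2-1)*(1-a^2)/((a^2*r^2-1)^2*(r^2-a^2)^2) := by
  intro h
  have hA : 0 < 1 - a^2 := by nlinarith
  have hr2 : 0 < r^2 - 1 := by nlinarith
  have hra : 0 < r^2 - a^2 := by nlinarith
  have hden1 : 0 < (1+a^2)^4 := by positivity
  have hden2 : 0 < a^2*(1-a^2)^2 := by positivity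
  have harne : a^2*r^2 - 1 ≠ 0 := by nlinarith [mul_pos ha (lt_trans one_pos hr)]
  have hden3 : 0 < (a^2*r^2-1)^2*(r^2-a^2)^2 := by positivity
  have t1 : -(1/2)*μ/a^2 < 0 := by
    have h0 : 0 < (1/2)*μ/a^2 := by positivity
    have : -(1/2)*μ/a^2 = -((1/2)*μ/a^2) := by ring
    linarith [this ▸ neg_neg_of_pos h0]
  have t3 : 0 < 2*m*(r^2+1)^2*a*r*(r^2-1)*(1-a^2)/((a^2*r^2-1)^2*(r^2-a^2)^2) := by
    apply div_pos _ hden3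
    have : 0 < r := lt_trans one_pos hr
    positivity
  have main : ((1-a^2)*a)/(1+a^2)^4 < (1/8)*(a^2+1)^2/(a^2*(1-a^2)^2) := by
    rw [div_lt_div_iff₀ hden1 hden2]
    have h1 : (2*a)^3 ≤ (1+a^2)^3 := by
      apply pow_le_pow_left₀ (by linarith) (by nlinarith [sq_nonneg (1-a)])
    have h3 : (1-a^2)^3 < (1+a^2)^3 := by
      apply pow_lt_pow_left₀ (by nlinarith) (le_of_lt hA) (by norm_num)
    have hp3 : 0 < (1+a^2)^3 := by positivity
    have hc : (1-a^2)^3 > 0 := pow_pos hA 3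
    have k1 : (2*a)^3 * (1-a^2)^3 ≤ (1+a^2)^3 * (1-a^2)^3 :=
      mul_le_mul_of_nonneg_right h1 (le_of_lt hc)
    have k2 : (1+a^2)^3 * (1-a^2)^3 < (1+a^2)^3 * (1+a^2)^3 :=
      mul_lt_mul_of_pos_left h3 hp3
    nlinarith [k1, k2]
  have e : -((1-a^2)*a)/(1+a^2)^4 = -((1-a^2)*a/(1+a^2)^4) := by ring
  linarith [e ▸ h]
end

section
/- In the curved 4-body problem on the sphere (stereographic model) with masses m₁ = m₂ = 1, m₃ = m₄ = m > 0 in symmetric collinear configuration z₁ = −z₂ = a, z₃ = −z₄ = r with 0 < a < r < 1, the relative-equilibrium equation for the outer pair, (1/2)(a²+1)²[1/((ar+1)²(a−r)²) + 1/((r+a)²(ar−1)²)] − (1−r²)r/(1+r²)⁴ = −(1/8)m(r²+1)²/(r(r²−1)²), has no solution with m > 0. -/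
set_option maxHeartbeats 1000000 in
theorem stmt_14 (a r m : ℝ) (ha : 0 < a) (har : a < r) (hr : r < 1) (hm : 0 < m) :
    (1/2) * (a^2+1)^2 * (1/((a*r+1)^2*(a-r)^2) + 1/((r+a)^2*(a*r-1)^2))
        - (1-r^2)*r/(1+r^2)^4
      ≠ -(1/8)*m*(r^2+1)^2/(r*(r^2-1)^2) := by
  have hr0 : 0 < r := ha.trans har
  have har1 : a * r < 1 := by nlinarith
  have hra : 0 < r - a := by linarith
  have hd1 : 0 < (a-r)^2 := by nlinarith [mul_pos hra hra]
  have hd2 : 0 < (a*r-1)^2 := by nlinarith [mul_pos (show 0 < 1 - a*r by linarith) (show 0 < 1 - a*r by linarith)]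
  have hD1 : 0 < (a*r+1)^2*(a-r)^2 := mul_pos (by positivity) hd1
  have hD2 : 0 < (r+a)^2*(a*r-1)^2 := mul_pos (by positivity) hd2
  have e1 : (a*r+1)^2 < 4 := by nlinarith [mul_pos (show 0 < 2-(a*r+1) by linarith) (show 0 < 2+(a*r+1) by nlinarith)]
  have e2 : (a-r)^2 < 1 := by nlinarith
  have e3 : (r+a)^2 < 4 := by nlinarith
  have e4 : (a*r-1)^2 < 1 := by nlinarith [mul_pos (show 0 < 1-(a*r-1) by linarith) (show 0 < 1+(a*r-1) by nlinarith)]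
  have hD1lt : (a*r+1)^2*(a-r)^2 < 4 := by
    calc (a*r+1)^2*(a-r)^2 ≤ (a*r+1)^2 * 1 :=
          mul_le_mul_of_nonneg_left e2.le (sq_nonneg _)
      _ < 4 := by rw [mul_one]; exact e1
  have hD2lt : (r+a)^2*(a*r-1)^2 < 4 := by
    calc (r+a)^2*(a*r-1)^2 ≤ (r+a)^2 * 1 :=
          mul_le_mul_of_nonneg_left e4.le (sq_nonneg _)
      _ < 4 := by rw [mul_one]; exact e3
  set s1 := 1/((a*r+1)^2*(a-r)^2) with hs1
  set s2 := 1/((r+a)^2*(a*r-1)^2) with hs2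
  set t := (1-r^2)*r/(1+r^2)^4 with ht
  have h1 : 1/4 < s1 := by
    rw [hs1, div_lt_div_iff₀ (by norm_num) hD1]; linarith
  have h2 : 1/4 < s2 := by
    rw [hs2, div_lt_div_iff₀ (by norm_num) hD2]; linarith
  have h3 : t < 1/4 := by
    rw [ht, div_lt_div_iff₀ (by positivity) (by norm_num)]
    nlinarith [sq_nonneg (1-2*r), pow_pos hr0 3, sq_nonneg r, sq_nonneg (r^2),
      sq_nonneg (r^3), sq_nonneg (r^4), sq_nonneg (1+r^2)]
  have hfac : (1:ℝ) ≤ (a^2+1)^2 := by nlinarith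
  have hL : 0 < (1/2) * (a^2+1)^2 * (s1 + s2) - t := by
    have hc : (1/2:ℝ) ≤ (1/2)*(a^2+1)^2 := by linarith
    have hmul := mul_le_mul_of_nonneg_right hc (show (0:ℝ) ≤ s1+s2 by linarith)
    linarith
  have hR : -(1/8)*m*(r^2+1)^2/(r*(r^2-1)^2) < 0 := by
    apply div_neg_of_neg_of_pos
    · have : 0 < m*(r^2+1)^2 := by positivity
      linarith
    · have h0 : 0 < 1 - r^2 := by nlinarith [mul_pos (show 0 < 1-r by linarith) (show 0 < 1+r by linarith)]
      have : 0 < (r^2-1)^2 := by nlinarith [mul_pos h0 h0]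
      exact mul_pos hr0 this
  intro h
  rw [h] at hL
  linarith
end

section
/- For real numbers x, y, z with 0 < x < y < z < 1 and any positive reals μ, M, m, the equation −(1−z²)z/(1+z²)⁴ + (1/2)(x²+1)²[1/((xz+1)²(x−z)²) + 1/((z+x)²(xz−1)²)] = −(1/2)μ/z² − (1/2)(y²+1)²M[1/((yz+1)²(y−z)²) + 1/((z+y)²(yz−1)²)] − (1/8)(z²+1)²m/((z²−1)²z²) has no solution. -/
/-!
Both sides have a definite sign. The right-hand side is minus a sum of nonnegative terms, one of
them `μ / (2 z²) > 0`. On the left, both `(1 - z²)² + (2z)² = (1 + z²)²` and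
`(z + x)² + (xz - 1)² = (x² + 1)(z² + 1)` are sums of two squares, so AM-GM gives
`(1 - z²) z ≤ (1 + z²)² / 4` and `(z + x)² (xz - 1)² ≤ (x² + 1)² (z² + 1)² / 4`. Hence the
negative term `-(1 - z²) z / (1 + z²)⁴ ≥ -1 / (4 (1 + z²)²)` is outweighed by
`(x² + 1)² / (2 (z + x)² (xz - 1)²) ≥ 2 / (z² + 1)²`.
-/

lemma one_sub_sq_mul_le (z : ℝ) : (1 - z ^ 2) * z ≤ (1 + z ^ 2) ^ 2 / 4 := by
  nlinarith [sq_nonneg (1 - z ^ 2 - 2 * z)]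

lemma sq_add_mul_sq_mul_sub_one_le (a b : ℝ) :
    (b + a) ^ 2 * (a * b - 1) ^ 2 ≤ (a ^ 2 + 1) ^ 2 * (b ^ 2 + 1) ^ 2 / 4 := by
  nlinarith [sq_nonneg ((b + a) ^ 2 - (a * b - 1) ^ 2)]

lemma one_sub_sq_mul_div_pow_four_lt (z : ℝ) :
    (1 - z ^ 2) * z / (1 + z ^ 2) ^ 4 < 2 / (1 + z ^ 2) ^ 2 := by
  have h : 0 < (1 + z ^ 2) ^ 2 := by positivity
  rw [div_lt_div_iff₀ (by positivity) h]
  nlinarith [one_sub_sq_mul_le z, mul_pos h h]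

lemma two_div_le_half_mul_div {a b : ℝ} (h : (b + a) * (a * b - 1) ≠ 0) :
    2 / (1 + b ^ 2) ^ 2 ≤ (1 / 2) * (a ^ 2 + 1) ^ 2 * (1 / ((b + a) ^ 2 * (a * b - 1) ^ 2)) := by
  have hpos : 0 < (b + a) ^ 2 * (a * b - 1) ^ 2 := by rw [← mul_pow]; positivity
  rw [mul_one_div, div_le_div_iff₀ (by positivity) hpos]
  nlinarith [sq_add_mul_sq_mul_sub_one_le a b]

lemma outer_attraction_pos {x z : ℝ} (hx : 0 < x) (hxz : x < z) (hz : z < 1) :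
    0 < -((1 - z ^ 2) * z) / (1 + z ^ 2) ^ 4
        + (1 / 2) * (x ^ 2 + 1) ^ 2 * (1 / ((x * z + 1) ^ 2 * (x - z) ^ 2)
          + 1 / ((z + x) ^ 2 * (x * z - 1) ^ 2)) := by
  have hxz1 : x * z < 1 := by nlinarith
  have hne : (z + x) * (x * z - 1) ≠ 0 := mul_ne_zero (by linarith) (by linarith)
  have hnear : 0 < (1 / 2) * (x ^ 2 + 1) ^ 2 * (1 / ((x * z + 1) ^ 2 * (x - z) ^ 2)) := by
    have hd : 0 < (x * z + 1) ^ 2 * (x - z) ^ 2 :=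
      mul_pos (pow_pos (by nlinarith) 2) (sq_pos_of_ne_zero (sub_ne_zero.2 hxz.ne))
    positivity
  have hfar := (one_sub_sq_mul_div_pow_four_lt z).trans_le (two_div_le_half_mul_div hne)
  rw [neg_div, mul_add]
  linarith

lemma outer_repulsion_neg {y z μ M m : ℝ} (hz : z ≠ 0) (hμ : 0 < μ) (hM : 0 ≤ M) (hm : 0 ≤ m) :
    -(1 / 2) * μ / z ^ 2
        - (1 / 2) * (y ^ 2 + 1) ^ 2 * M * (1 / ((y * z + 1) ^ 2 * (y - z) ^ 2)
          + 1 / ((z + y) ^ 2 * (y * z - 1) ^ 2))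
        - (1 / 8) * (z ^ 2 + 1) ^ 2 * m / ((z ^ 2 - 1) ^ 2 * z ^ 2) < 0 := by
  have h1 : 0 < (1 / 2) * μ / z ^ 2 := by positivity
  have h2 : 0 ≤ (1 / 2) * (y ^ 2 + 1) ^ 2 * M * (1 / ((y * z + 1) ^ 2 * (y - z) ^ 2)
      + 1 / ((z + y) ^ 2 * (y * z - 1) ^ 2)) := by positivity
  have h3 : 0 ≤ (1 / 8) * (z ^ 2 + 1) ^ 2 * m / ((z ^ 2 - 1) ^ 2 * z ^ 2) := by positivity
  rw [neg_mul, neg_div]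
  linarith

theorem stmt_15 (x y z μ M m : ℝ) (hx : 0 < x) (hxy : x < y) (hyz : y < z)
    (hz : z < 1) (hμ : 0 < μ) (hM : 0 < M) (hm : 0 < m) :
    -((1-z^2)*z)/(1+z^2)^4
        + (1/2)*(x^2+1)^2 * (1/((x*z+1)^2*(x-z)^2) + 1/((z+x)^2*(x*z-1)^2))
      ≠ -(1/2)*μ/z^2
          - (1/2)*(y^2+1)^2*M * (1/((y*z+1)^2*(y-z)^2) + 1/((z+y)^2*(y*z-1)^2))
          - (1/8)*(z^2+1)^2*m/((z^2-1)^2*z^2) := by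
  have hxz : x < z := hxy.trans hyz
  have hz0 : z ≠ 0 := (hx.trans hxz).ne'
  exact ((outer_repulsion_neg hz0 hμ hM.le hm.le).trans (outer_attraction_pos hx hxz hz)).ne'
end

section
/- Let n be odd and consider n bodies on a common geodesic in the stereographic model of the sphere, with positions 0 = z₁ < z₂ = −z₃ < z₄ = −z₅ < … < z_{n−1} = −z_n, all satisfying z_{n−1} < 1, and positive masses m₁, m₂ = m₃ = 1, m₄ = m₅, …, m_{n−1} = m_n. Then the relative-equilibrium equation for body n−1, namely −(1−z_{n−1}²)z_{n−1}/(1+z_{n−1}²)⁴ = −Σ_{i≠n−1} mᵢ(zᵢ²+1)²/(2(1+zᵢz_{n−1})²(zᵢ−z_{n−1})²), has no solution; in particular no such configuration is a relative equilibrium. -/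
set_option maxHeartbeats 1000000 in
theorem stmt_18 (n : ℕ) (hodd : Odd n) (hn : 5 ≤ n)
    (z m : ℕ → ℝ)
    (hz1 : z 1 = 0)
    (hmpos : ∀ i ∈ Finset.Icc 1 n, 0 < m i)
    (hm2 : m 2 = 1) (hm3 : m 3 = 1)
    (hpairm : ∀ k, 1 ≤ k → 2*k+1 ≤ n → m (2*k+1) = m (2*k))
    (hpairz : ∀ k, 1 ≤ k → 2*k+1 ≤ n → z (2*k+1) = - z (2*k))
    (hmono : ∀ k l, 1 ≤ k → k < l → 2*l ≤ n-1 → z (2*k) < z (2*l))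
    (hpos : 0 < z 2) (hlt1 : z (n-1) < 1) :
    ¬ (-((1 - z (n-1)^2) * z (n-1)) / (1 + z (n-1)^2)^4
        = -∑ i ∈ (Finset.Icc 1 n).erase (n-1),
            m i * (z i^2+1)^2 / (2*(1 + z i * z (n-1))^2 * (z i - z (n-1))^2)) := by
  intro heq
  obtain ⟨k, hk⟩ := hodd
  have hk2 : 2 ≤ k := by omega
  have hn1 : n - 1 = 2 * k := by omega
  set a := z 2 with ha_def
  set b := z (n-1) with hb_def
  have hab : a < b := by
    have := hmono 1 k le_rfl (by omega) (by omega)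
    rw [hb_def, hn1]
    simpa using this
  have hb0 : 0 < b := lt_trans hpos hab
  -- the equation with signs removed
  have heq' : (1 - b^2) * b / (1 + b^2)^4
      = ∑ i ∈ (Finset.Icc 1 n).erase (n-1),
          m i * (z i^2+1)^2 / (2*(1 + z i * b)^2 * (z i - b)^2) := by
    have := heq
    field_simp at this ⊢
    linarith [this]
  -- each term is nonnegative
  have hnonneg : ∀ i ∈ (Finset.Icc 1 n).erase (n-1),
      0 ≤ m i * (z i^2+1)^2 / (2*(1 + z i * b)^2 * (z i - b)^2) := by
    intro i hi
    have hi' : i ∈ Finset.Icc 1 n := Finset.mem_of_mem_erase hi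
    have hm := (hmpos i hi').le
    positivity
  -- 2 is in the index set
  have h2mem : 2 ∈ (Finset.Icc 1 n).erase (n-1) := by
    refine Finset.mem_erase.mpr ⟨by omega, ?_⟩
    simp [Finset.mem_Icc]; omega
  have hsum_ge : m 2 * (z 2^2+1)^2 / (2*(1 + z 2 * b)^2 * (z 2 - b)^2)
      ≤ ∑ i ∈ (Finset.Icc 1 n).erase (n-1),
          m i * (z i^2+1)^2 / (2*(1 + z i * b)^2 * (z i - b)^2) :=
    Finset.single_le_sum hnonneg h2mem
  -- the key inequality
  have hkey : (1 - b^2) * b / (1 + b^2)^4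
      < m 2 * (z 2^2+1)^2 / (2*(1 + z 2 * b)^2 * (z 2 - b)^2) := by
    rw [hm2, ← ha_def]
    have hd1 : (0:ℝ) < (1 + b^2)^4 := by positivity
    have hab' : (0:ℝ) < 1 + a * b := by nlinarith
    have hd2 : (0:ℝ) < 2*(1 + a * b)^2 * (a - b)^2 := by
      have : a - b ≠ 0 := by linarith [hab]
      positivity
    rw [div_lt_div_iff₀ hd1 hd2]
    have h1 : (1 + a*b)^2 * (a-b)^2 < (1 + b^2)^2 * b^2 := by
      have e0 : (0:ℝ) < b * (b - a) := mul_pos hb0 (by linarith)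
      have e1 : (1 + a*b)^2 < (1 + b^2)^2 := by
        have h' : 1 + a*b < 1 + b^2 := by nlinarith
        exact pow_lt_pow_left₀ h' hab'.le two_ne_zero
      have e2 : (a-b)^2 < b^2 := by
        have h' : (a-b)^2 = (b-a)^2 := by ring
        rw [h']
        exact pow_lt_pow_left₀ (by linarith) (by linarith) two_ne_zero
      exact mul_lt_mul'' e1 e2 (sq_nonneg _) (sq_nonneg _)
    have h2 : 2 * b^3 < (1 + b^2)^2 := by
      nlinarith [sq_nonneg (b*(1-b)), sq_nonneg b]
    have hD : (0:ℝ) < (1 + a*b)^2 * (a-b)^2 := by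
      have : a - b ≠ 0 := by linarith
      positivity
    have c1 : (1-b^2)*b*(2*(1+a*b)^2*(a-b)^2) < 2*b^3*(1+b^2)^2 := by
      have s1 : (1-b^2)*b*(2*(1+a*b)^2*(a-b)^2) ≤ b*(2*((1+a*b)^2*(a-b)^2)) := by
        nlinarith [mul_nonneg (mul_nonneg (sq_nonneg b) hb0.le) hD.le]
      have s2 : b*(2*((1+a*b)^2*(a-b)^2)) < b*(2*((1+b^2)^2*b^2)) := by
        have := mul_lt_mul_of_pos_left h1 (show (0:ℝ) < 2*b by linarith)
        nlinarith [this]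
      nlinarith [s1, s2]
    have c2 : 2*b^3*(1+b^2)^2 < (1+b^2)^4 := by
      have := mul_lt_mul_of_pos_right h2 (show (0:ℝ) < (1+b^2)^2 by positivity)
      nlinarith [this]
    have c3 : (1+b^2)^4 ≤ (a^2+1)^2*(1+b^2)^4 := by
      nlinarith [mul_nonneg (show (0:ℝ) ≤ a^4 + 2*a^2 by positivity) hd1.le]
    linarith [c1, c2, c3]
  linarith [heq', hsum_ge, hkey]
end
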